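/- arXiv:2308.01422 — 3 statements merged into one kernel-verified Lean document; each statement's English description precedes it below -/
import Mathlib

section
/- Let f and g be problems and let k ∈ ℕ be positive. If both f and g are k-weakly continuous, then the composition f ∘ g is k-weakly continuous. -/
/-- Baire space. -/
abbrev Baire := ℕ → ℕ

/-- A problem: a partial multivalued function on Baire space, given as the
solution-set map; the domain is the set of instances with nonempty solution set. -/
def Problem := Baire → Set Baire

/-- Domain of a problem. -/
def Dom (f : Problem) : Set Baire := {x | (f x).Nonempty}

/-- A standard computable pairing of two sequences (interleaving). -/
def pair (x y : Baire) : Baire := fun n => if n % 2 = 0 then x (n / 2) else y (n / 2)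

/-- Initial segment of length `m` of a sequence. -/
def initSeg (x : Baire) (m : ℕ) : List ℕ := (List.range m).map x

/-- `F` is (the restriction to `D` of) a partial computable function on Baire space:
there is a computable monotone oracle functional computing `F x` from prefixes of `x`,
correctly and consistently, for every `x ∈ D`. -/
def ComputableOn (F : Baire → Baire) (D : Set Baire) : Prop :=
  ∃ φ : List ℕ → ℕ → Option ℕ, Computable₂ φ ∧
    ∀ x ∈ D, ∀ n : ℕ,
      (∃ m, φ (initSeg x m) n = some (F x n)) ∧
      (∀ m v, φ (initSeg x m) n = some v → v = F x n)

/-- Weihrauch reducibility `f ≤_W g`, with the partial computable forward functional `k`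
defined on `Dom f` and the partial computable backward functional `h` defined on all
pairs `⟨x, y⟩` with `x ∈ Dom f` and `y` a `g`-solution of `k x`. -/
def WRed (f g : Problem) : Prop :=
  ∃ h k : Baire → Baire,
    ComputableOn k (Dom f) ∧
    ComputableOn h {p | ∃ x ∈ Dom f, ∃ y ∈ g (k x), p = pair x y} ∧
    ∀ x ∈ Dom f, k x ∈ Dom g ∧ ∀ y ∈ g (k x), h (pair x y) ∈ f x

/-- Weihrauch equivalence. -/
def WEquiv (f g : Problem) : Prop := WRed f g ∧ WRed g f

/-- Continuous Weihrauch reducibility `f ≤*_W g`: as `WRed` but the functionals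
need only be partial continuous (continuous on their domains, Baire space carrying
the product topology). -/
def ContWRed (f g : Problem) : Prop :=
  ∃ h k : Baire → Baire,
    ContinuousOn k (Dom f) ∧
    ContinuousOn h {p | ∃ x ∈ Dom f, ∃ y ∈ g (k x), p = pair x y} ∧
    ∀ x ∈ Dom f, k x ∈ Dom g ∧ ∀ y ∈ g (k x), h (pair x y) ∈ f x

/-- Continuous Weihrauch equivalence. -/
def ContWEquiv (f g : Problem) : Prop := ContWRed f g ∧ ContWRed g f

/-- Composition of problems: `dom (f ∘ g) = {x ∈ dom g : g x ⊆ dom f}` and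
`(f ∘ g) x = {z : ∃ y ∈ g x, z ∈ f y}`. -/
def pcomp (f g : Problem) : Problem :=
  fun x => {z | g x ⊆ Dom f ∧ ∃ y ∈ g x, z ∈ f y}

/-- The identity problem. -/
def idp : Problem := fun x => {x}

/-- `p` is (a representative of) the compositional product `f * g`: the maximum,
with respect to `≤_W`, of `{f' ∘ g' : f' ≤_W f, g' ≤_W g}`. -/
def IsCompProd (f g p : Problem) : Prop :=
  (∃ f' g', WRed f' f ∧ WRed g' g ∧ WEquiv p (pcomp f' g')) ∧
  (∀ f' g', WRed f' f → WRed g' g → WRed (pcomp f' g') p)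

/-- `IsIter f n p` : `p` is (a representative of) `f^[n]`, the compositional product of
`n` copies of `f`, with `f^[0] := id`. -/
def IsIter (f : Problem) : ℕ → Problem → Prop
  | 0, p => p = idp
  | n + 1, p => ∃ q, IsIter f n q ∧ IsCompProd f q p

/-- The constant sequence with value `n`. -/
def cseq (n : ℕ) : Baire := fun _ => n

/-- The limited principle of omniscience. -/
def LPO : Problem := fun x =>
  {y | ((∃ n, x n = 0) ∧ y = cseq 0) ∨ ((∀ n, x n ≠ 0) ∧ y = cseq 1)}

/-- The lesser limited principle of omniscience. -/
def LLPO : Problem := fun x =>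
  {y | (∀ i j, x i ≠ 0 → x j ≠ 0 → i = j) ∧
       ((y = cseq 0 ∧ ∀ i, Even i → x i = 0) ∨
        (y = cseq 1 ∧ ∀ i, Odd i → x i = 0))}

/-- Turing reducibility between points of Baire space: `x` is computable from
oracle `y`. -/
def TuringLE (x y : Baire) : Prop :=
  ∃ φ : List ℕ → ℕ → Option ℕ, Computable₂ φ ∧
    ∀ n : ℕ, (∃ m, φ (initSeg y m) n = some (x n)) ∧
      (∀ m v, φ (initSeg y m) n = some v → v = x n)

/-- Mutual Turing reducibility: `x` and `y` have the same Turing degree. -/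
def TuringEquiv (x y : Baire) : Prop := TuringLE x y ∧ TuringLE y x

/-- Strict Turing reducibility. -/
def TuringLT (x y : Baire) : Prop := TuringLE x y ∧ ¬ TuringLE y x

/-- The problem `w_a`, for `a` a representative of a (non-zero) Turing degree. -/
def w (a : Baire) : Problem := fun x =>
  {y | (Computable x ∧ ¬ Computable y) ∨ (¬ Computable x ∧ TuringEquiv y a)}

/-- `k`-weak continuity of a problem. -/
def WeaklyContinuous (k : ℕ) (f : Problem) : Prop :=
  ∀ x ∈ Dom f, ∀ y : ℕ → Baire, (∀ n, y n ∈ Dom f) →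
    Filter.Tendsto y Filter.atTop (nhds x) →
    ∃ u ∈ f x, ∀ l < k, ∀ m : ℕ, ∃ n ≥ m,
      ∃ v ∈ f (y (n * k + l)), initSeg u m = initSeg v m

/-- Product of two problems. -/
def prodP (f g : Problem) : Problem := fun z =>
  {w | ∃ x y u v, z = pair x y ∧ w = pair u v ∧ u ∈ f x ∧ v ∈ g y}

/-- `powP f n` : the product of `n` copies of `f` (for `n ≥ 1`). -/
def powP (f : Problem) : ℕ → Problem
  | 0 => idp
  | 1 => f
  | n + 2 => prodP f (powP f (n + 1))

/-- A problem `f` is `k`-continuous: it has a realizer `r` (defined on a domain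
`D ⊇ Dom f`) together with a partition of `D` into at most `k` pieces (given by a
coloring `c`) such that `r` is continuous on each piece. -/
def kContinuous (k : ℕ) (f : Problem) : Prop :=
  ∃ (D : Set Baire) (r : Baire → Baire) (c : Baire → Fin k),
    Dom f ⊆ D ∧ (∀ x ∈ Dom f, r x ∈ f x) ∧
    ∀ i : Fin k, ContinuousOn r {x ∈ D | c x = i}

lemma initSeg_eq_iff {u v : Baire} {m : ℕ} :
    initSeg u m = initSeg v m ↔ ∀ t < m, u t = v t := by
  simp [initSeg, List.map_eq_map_iff]

/-- `k`-weak continuity is preserved under composition of problems. -/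
theorem weaklyContinuous_pcomp (f g : Problem) (k : ℕ) (hk : 0 < k)
    (hf : WeaklyContinuous k f) (hg : WeaklyContinuous k g) :
    WeaklyContinuous k (pcomp f g) := by
  intro x hx y hyd hty
  -- unpack domain facts
  obtain ⟨z0, hgx, y0, hy0, _⟩ := hx
  have hydom : ∀ n, (g (y n)).Nonempty ∧ g (y n) ⊆ Dom f := by
    intro n
    obtain ⟨w0, hsub, v0, hv0, _⟩ := hyd n
    exact ⟨⟨v0, hv0⟩, hsub⟩
  -- apply hg
  obtain ⟨u, hu, Hg⟩ := hg x ⟨y0, hy0⟩ y (fun n => (hydom n).1) hty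
  have hud : u ∈ Dom f := hgx hu
  -- build the sequence z
  have H'' : ∀ j : ℕ, ∃ n ≥ j / k, ∃ v ∈ g (y (n * k + j % k)),
      initSeg u (j / k) = initSeg v (j / k) :=
    fun j => Hg (j % k) (Nat.mod_lt _ hk) (j / k)
  choose N hN V hV hseg using H''
  have hVd : ∀ j, V j ∈ Dom f := fun j => (hydom _).2 (hV j)
  have htz : Filter.Tendsto V Filter.atTop (nhds u) := by
    rw [tendsto_pi_nhds]
    intro i
    have : ∀ᶠ j in Filter.atTop, V j i = u i := by
      rw [Filter.eventually_atTop]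
      refine ⟨k * (i + 1), fun j hj => ?_⟩
      have hik : i < j / k := by
        have : i + 1 ≤ j / k := (Nat.le_div_iff_mul_le hk).2 (by linarith [Nat.mul_comm k (i+1)])
        omega
      exact ((initSeg_eq_iff.1 (hseg j)) i hik).symm
    exact Filter.Tendsto.congr' (by filter_upwards [this] with j h using h.symm) tendsto_const_nhds
  obtain ⟨wf, hwf, Hf⟩ := hf u hud V hVd htz
  refine ⟨wf, ⟨hgx, u, hu, hwf⟩, ?_⟩
  intro l hl m
  obtain ⟨n, hn, s, hs, hseg2⟩ := Hf l hl m
  have hjm : (n * k + l) % k = l := by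
    rw [Nat.add_comm, Nat.add_mul_mod_self_right, Nat.mod_eq_of_lt hl]
  have hjd : (n * k + l) / k = n := by
    rw [Nat.add_comm, Nat.add_mul_div_right _ _ hk, Nat.div_eq_of_lt hl, Nat.zero_add]
  have hNj := hN (n * k + l)
  have hVj := hV (n * k + l)
  rw [hjm] at hVj
  rw [hjd] at hNj
  exact ⟨N (n * k + l), by omega, s, ⟨(hydom _).2, V (n * k + l), hVj, hs⟩, hseg2⟩
end

section
/- Let f be a problem that is 2-weakly discontinuous (i.e., not 2-weakly continuous). Then LLPO ≤*_W f, i.e., LLPO is continuously Weihrauch reducible to f. -/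
/-! ### Auxiliary machinery for the main theorem -/

lemma cyl_mem_nhds (z : Baire) (M : ℕ) : {w : Baire | ∀ i < M, w i = z i} ∈ nhds z := by
  have h : Set.pi ↑(Finset.range M) (fun i => ({z i} : Set ℕ)) ∈ nhds z :=
    set_pi_mem_nhds (Finset.finite_toSet _)
      (fun i _ => (isOpen_discrete _).mem_nhds rfl)
  refine Filter.mem_of_superset h ?_
  intro w hw i hi
  have := hw i (by simp [hi])
  simpa using this

lemma cwa_of_prefix (g : Baire → Baire) (s : Set Baire) (z : Baire)
    (h : ∀ i : ℕ, ∃ M, ∀ w ∈ s, (∀ j < M, w j = z j) → g w i = g z i) :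
    ContinuousWithinAt g s z := by
  have key : Filter.Tendsto g (nhdsWithin z s) (nhds (g z)) := by
    rw [tendsto_pi_nhds]
    intro i
    obtain ⟨M, hM⟩ := h i
    apply tendsto_nhds_of_eventually_eq
    have h1 : {w : Baire | ∀ j < M, w j = z j} ∈ nhdsWithin z s :=
      nhdsWithin_le_nhds (cyl_mem_nhds z M)
    have h2 : s ∈ nhdsWithin z s := self_mem_nhdsWithin
    filter_upwards [h1, h2] with w hw hws
    exact hM w hws hw
  exact key

lemma pair_even (a b : Baire) (n : ℕ) : pair a b (2 * n) = a n := by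
  have h1 : 2 * n % 2 = 0 := by omega
  have h2 : 2 * n / 2 = n := by omega
  simp [pair, h1, h2]

lemma pair_odd (a b : Baire) (n : ℕ) : pair a b (2 * n + 1) = b n := by
  have h1 : (2 * n + 1) % 2 = 1 := by omega
  have h2 : (2 * n + 1) / 2 = n := by omega
  simp [pair, h1, h2]

lemma initSeg_congr {v v' : Baire} {m : ℕ} (h : ∀ i < m, v i = v' i) :
    initSeg v m = initSeg v' m := by
  simp only [initSeg]
  exact List.map_congr_left (fun a ha => h a (List.mem_range.mp ha))

/-- `v`'s length-`m` prefix excludes all solutions on side `l` of the witnessing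
sequence `y`. -/
def KillP (f : Problem) (y : ℕ → Baire) (m l : ℕ) (v : Baire) : Prop :=
  ∀ n ≥ m, ∀ w ∈ f (y (n * 2 + l)), initSeg v m ≠ initSeg w m

/-- The LLPO answer forced by a nonzero entry at position `p`. -/
def sideOf (p : ℕ) : ℕ := if Even p then 1 else 0

open Classical in
/-- The canonically chosen side killed by `v`. -/
noncomputable def lvF (f : Problem) (y : ℕ → Baire) (v : Baire) : ℕ :=
  if hv : ∃ m, KillP f y m 0 v ∨ KillP f y m 1 v then
    (if KillP f y (Nat.find hv) 0 v then 0 else 1)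
  else 0

open Classical in
/-- The forward functional. -/
noncomputable def kF (f : Problem) (x : Baire) (y : ℕ → Baire) (N : ℕ → ℕ) (z : Baire) :
    Baire :=
  if hz : ∃ i, z i ≠ 0 then
    y ((max (Nat.find hz) (N (Nat.find hz))) * 2 + sideOf (Nat.find hz))
  else x

open Classical in
/-- The backward functional. -/
noncomputable def hF (f : Problem) (y : ℕ → Baire) (q : Baire) : Baire :=
  if hz : ∃ i, q (2 * i) ≠ 0 then cseq (sideOf (Nat.find hz))
  else cseq (1 - lvF f y (fun n => q (2 * n + 1)))

/-- `LLPO` continuously Weihrauch reduces to any `2`-weakly discontinuous problem. -/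
theorem llpo_red_of_two_weakly_discontinuous (f : Problem)
    (hf : ¬ WeaklyContinuous 2 f) : ContWRed LLPO f := by
  classical
  rw [WeaklyContinuous] at hf
  push_neg at hf
  obtain ⟨x, hx, y, hy, hty, hP⟩ := hf
  -- every solution of `x` kills a side
  have hPK : ∀ v ∈ f x, ∃ m, KillP f y m 0 v ∨ KillP f y m 1 v := by
    intro v hvx
    obtain ⟨l, hl2, m, hm⟩ := hP v hvx
    refine ⟨m, ?_⟩
    interval_cases l
    · exact Or.inl hm
    · exact Or.inr hm
  -- modulus of convergence
  have h1 : ∀ i : ℕ, ∀ᶠ j in Filter.atTop, y j i = x i := by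
    intro i
    have h2 := tendsto_pi_nhds.mp hty i
    rw [nhds_discrete ℕ] at h2
    exact Filter.tendsto_pure.mp h2
  have h4 : ∀ p : ℕ, ∀ᶠ j in Filter.atTop, ∀ i < p, y j i = x i := by
    intro p
    induction p with
    | zero => simp
    | succ p ih =>
      filter_upwards [ih, h1 p] with j hj hjp i hi
      rcases Nat.lt_succ_iff_lt_or_eq.mp hi with h | h
      · exact hj i h
      · subst h; exact hjp
  have hNex : ∀ p : ℕ, ∃ N, ∀ j ≥ N, ∀ i < p, y j i = x i := by
    intro p
    exact Filter.eventually_atTop.mp (h4 p)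
  choose N hN using hNex
  -- basic equations
  have kzero : ∀ z : Baire, ¬(∃ i, z i ≠ 0) → kF f x y N z = x := by
    intro z hz; simp only [kF]; rw [dif_neg hz]
  have kpos : ∀ (z : Baire) (hz : ∃ i, z i ≠ 0), kF f x y N z =
      y ((max (Nat.find hz) (N (Nat.find hz))) * 2 + sideOf (Nat.find hz)) := by
    intro z hz; simp only [kF]; rw [dif_pos hz]
  have hposE : ∀ (q : Baire) (hz : ∃ i, q (2 * i) ≠ 0),
      hF f y q = cseq (sideOf (Nat.find hz)) := by
    intro q hz; simp only [hF]; rw [dif_pos hz]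
  have hnegE : ∀ q : Baire, ¬(∃ i, q (2 * i) ≠ 0) →
      hF f y q = cseq (1 - lvF f y (fun n => q (2 * n + 1))) := by
    intro q hz; simp only [hF]; rw [dif_neg hz]
  have lv01 : ∀ v : Baire, lvF f y v = 0 ∨ lvF f y v = 1 := by
    intro v; simp only [lvF]; split_ifs <;> simp
  have lvkill : ∀ (v : Baire) (hv : ∃ m, KillP f y m 0 v ∨ KillP f y m 1 v),
      KillP f y (Nat.find hv) (lvF f y v) v := by
    intro v hv
    simp only [lvF]; rw [dif_pos hv]
    by_cases hk : KillP f y (Nat.find hv) 0 v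
    · rw [if_pos hk]; exact hk
    · rw [if_neg hk]
      rcases Nat.find_spec hv with h0 | h1
      · exact absurd h0 hk
      · exact h1
  have kcongr : ∀ (m l : ℕ) (v v' : Baire), initSeg v m = initSeg v' m →
      (KillP f y m l v ↔ KillP f y m l v') := by
    intro m l v v' h
    unfold KillP
    rw [h]
  refine ⟨hF f y, kF f x y N, ?_, ?_, ?_⟩
  · -- continuity of k
    intro z hzdom
    apply cwa_of_prefix
    intro i
    by_cases hz0 : ∃ j, z j ≠ 0
    · refine ⟨Nat.find hz0 + 1, ?_⟩
      intro w hwdom hw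
      have hwp : w (Nat.find hz0) ≠ 0 := by
        rw [hw _ (by omega)]; exact Nat.find_spec hz0
      have hzw : ∃ j, w j ≠ 0 := ⟨_, hwp⟩
      have hfind : Nat.find hzw = Nat.find hz0 := by
        rw [Nat.find_eq_iff]
        refine ⟨hwp, fun j hj hcon => ?_⟩
        rw [hw j (by omega)] at hcon
        exact Nat.find_min hz0 hj hcon
      rw [kpos w hzw, kpos z hz0, hfind]
    · refine ⟨i + 1, ?_⟩
      intro w hwdom hw
      have hzall : ∀ j, z j = 0 := fun j => by
        by_contra hc; exact hz0 ⟨j, hc⟩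
      rw [kzero z hz0]
      by_cases hw0 : ∃ j, w j ≠ 0
      · rw [kpos w hw0]
        have hpi : i + 1 ≤ Nat.find hw0 := by
          by_contra hcon
          push_neg at hcon
          exact Nat.find_spec hw0 (by rw [hw _ (by omega)]; exact hzall _)
        have hidx : (max (Nat.find hw0) (N (Nat.find hw0))) * 2 + sideOf (Nat.find hw0)
            ≥ N (Nat.find hw0) := by
          have := le_max_right (Nat.find hw0) (N (Nat.find hw0)); omega
        exact hN (Nat.find hw0) _ hidx i (by omega)
      · rw [kzero w hw0]
  · -- continuity of h
    intro q hq
    obtain ⟨z, hzdom, v, hvf, rfl⟩ := hq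
    apply cwa_of_prefix
    intro i
    by_cases hz0 : ∃ j, z j ≠ 0
    · -- z has a nonzero entry, locally constant
      refine ⟨2 * Nat.find hz0 + 1, ?_⟩
      intro q' hq'H hpre
      have hd : ∃ j, (pair z v) (2 * j) ≠ 0 :=
        ⟨Nat.find hz0, by rw [pair_even]; exact Nat.find_spec hz0⟩
      have hd' : ∃ j, q' (2 * j) ≠ 0 :=
        ⟨Nat.find hz0, by rw [hpre _ (by omega), pair_even]; exact Nat.find_spec hz0⟩
      have e1 : Nat.find hd = Nat.find hz0 := by
        rw [Nat.find_eq_iff]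
        constructor
        · rw [pair_even]; exact Nat.find_spec hz0
        · intro j hj hcon
          rw [pair_even] at hcon
          exact Nat.find_min hz0 hj hcon
      have e2 : Nat.find hd' = Nat.find hz0 := by
        rw [Nat.find_eq_iff]
        constructor
        · rw [hpre _ (by omega), pair_even]; exact Nat.find_spec hz0
        · intro j hj hcon
          rw [hpre _ (by omega), pair_even] at hcon
          exact Nat.find_min hz0 hj hcon
      rw [hposE q' hd', hposE (pair z v) hd, e1, e2]
    · -- z is identically zero
      have hzall : ∀ j, z j = 0 := fun j => by
        by_contra hc; exact hz0 ⟨j, hc⟩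
      have hvx2 : v ∈ f x := by rw [kzero z hz0] at hvf; exact hvf
      have hv := hPK v hvx2
      have hdz : ¬ ∃ j, (pair z v) (2 * j) ≠ 0 := by
        rintro ⟨j, hj⟩; rw [pair_even] at hj; exact hj (hzall j)
      have hdv : (fun n => (pair z v) (2 * n + 1)) = v := funext (pair_odd z v)
      refine ⟨2 * Nat.find hv + 2, ?_⟩
      intro q' hq'H hpre
      obtain ⟨z', hz'dom, v', hv'f, rfl⟩ := hq'H
      have hz'pre : ∀ j ≤ Nat.find hv, z' j = 0 := by
        intro j hj
        have := hpre (2 * j) (by omega)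
        rw [pair_even, pair_even] at this
        rw [this]; exact hzall j
      have hv'pre : ∀ j < Nat.find hv, v' j = v j := by
        intro j hj
        have := hpre (2 * j + 1) (by omega)
        rw [pair_odd, pair_odd] at this
        exact this
      have hinit : initSeg v (Nat.find hv) = initSeg v' (Nat.find hv) :=
        initSeg_congr (fun j hj => (hv'pre j hj).symm)
      rw [hnegE (pair z v) hdz, hdv]
      by_cases hz'0 : ∃ j, z' j ≠ 0
      · -- z' becomes nonzero; its side must be the one not killed by v
        have hp' : Nat.find hv < Nat.find hz'0 := by
          by_contra hcon
          push_neg at hcon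
          exact Nat.find_spec hz'0 (hz'pre _ hcon)
        have hd' : ∃ j, (pair z' v') (2 * j) ≠ 0 :=
          ⟨Nat.find hz'0, by rw [pair_even]; exact Nat.find_spec hz'0⟩
        have e2 : Nat.find hd' = Nat.find hz'0 := by
          rw [Nat.find_eq_iff]
          constructor
          · rw [pair_even]; exact Nat.find_spec hz'0
          · intro j hj hcon
            rw [pair_even] at hcon
            exact Nat.find_min hz'0 hj hcon
        rw [hposE (pair z' v') hd', e2]
        have hkz' := kpos z' hz'0
        have hne : sideOf (Nat.find hz'0) ≠ lvF f y v := by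
          intro hcon
          rw [hcon] at hkz'
          rw [hkz'] at hv'f
          exact lvkill v hv (max (Nat.find hz'0) (N (Nat.find hz'0)))
            (le_trans (le_of_lt hp') (le_max_left _ _)) v' hv'f hinit
        have hs01 : sideOf (Nat.find hz'0) = 0 ∨ sideOf (Nat.find hz'0) = 1 := by
          unfold sideOf; split_ifs <;> simp
        have hl01 := lv01 v
        simp only [cseq]
        omega
      · -- z' also identically zero; canonical side agrees
        have hz'all : ∀ j, z' j = 0 := fun j => by
          by_contra hc; exact hz'0 ⟨j, hc⟩
        have hdz' : ¬ ∃ j, (pair z' v') (2 * j) ≠ 0 := by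
          rintro ⟨j, hj⟩; rw [pair_even] at hj; exact hj (hz'all j)
        have hdv' : (fun n => (pair z' v') (2 * n + 1)) = v' := funext (pair_odd z' v')
        rw [hnegE (pair z' v') hdz', hdv']
        have hspec' : KillP f y (Nat.find hv) 0 v' ∨ KillP f y (Nat.find hv) 1 v' := by
          rcases Nat.find_spec hv with h0 | h0
          · exact Or.inl ((kcongr _ _ _ _ hinit).mp h0)
          · exact Or.inr ((kcongr _ _ _ _ hinit).mp h0)
        have hv' : ∃ m, KillP f y m 0 v' ∨ KillP f y m 1 v' := ⟨_, hspec'⟩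
        have hfind' : Nat.find hv' = Nat.find hv := by
          rw [Nat.find_eq_iff]
          refine ⟨hspec', ?_⟩
          intro m hm hcon
          have hinitm : initSeg v m = initSeg v' m :=
            initSeg_congr (fun j hj => (hv'pre j (by omega)).symm)
          rcases hcon with h0 | h0
          · exact Nat.find_min hv hm (Or.inl ((kcongr _ _ _ _ hinitm).mpr h0))
          · exact Nat.find_min hv hm (Or.inr ((kcongr _ _ _ _ hinitm).mpr h0))
        have hlveq : lvF f y v' = lvF f y v := by
          simp only [lvF]
          rw [dif_pos hv', dif_pos hv, hfind']
          have hiff := kcongr (Nat.find hv) 0 v v' hinit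
          by_cases h0 : KillP f y (Nat.find hv) 0 v
          · rw [if_pos h0, if_pos (hiff.mp h0)]
          · rw [if_neg h0, if_neg (fun hc => h0 (hiff.mpr hc))]
        rw [hlveq]
  · -- correctness
    intro z hzdom
    have hamo : ∀ i j, z i ≠ 0 → z j ≠ 0 → i = j := by
      obtain ⟨y₀, hy₀⟩ := hzdom
      exact hy₀.1
    constructor
    · by_cases hz0 : ∃ i, z i ≠ 0
      · rw [kpos z hz0]; exact hy _
      · rw [kzero z hz0]; exact hx
    · intro v hvkz
      by_cases hz0 : ∃ i, z i ≠ 0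
      · have hd : ∃ j, (pair z v) (2 * j) ≠ 0 :=
          ⟨Nat.find hz0, by rw [pair_even]; exact Nat.find_spec hz0⟩
        have e1 : Nat.find hd = Nat.find hz0 := by
          rw [Nat.find_eq_iff]
          constructor
          · rw [pair_even]; exact Nat.find_spec hz0
          · intro j hj hcon
            rw [pair_even] at hcon
            exact Nat.find_min hz0 hj hcon
        rw [hposE (pair z v) hd, e1]
        simp only [LLPO, Set.mem_setOf_eq]
        refine ⟨hamo, ?_⟩
        by_cases hpe : Even (Nat.find hz0)
        · right
          refine ⟨by simp [sideOf, hpe], ?_⟩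
          intro i hi
          by_contra hzi
          have := hamo i (Nat.find hz0) hzi (Nat.find_spec hz0)
          rw [this] at hi
          exact (Nat.not_odd_iff_even.mpr hpe) hi
        · left
          refine ⟨by simp [sideOf, hpe], ?_⟩
          intro i hi
          by_contra hzi
          have := hamo i (Nat.find hz0) hzi (Nat.find_spec hz0)
          rw [this] at hi
          exact hpe hi
      · have hzall : ∀ j, z j = 0 := fun j => by
          by_contra hc; exact hz0 ⟨j, hc⟩
        have hdz : ¬ ∃ j, (pair z v) (2 * j) ≠ 0 := by
          rintro ⟨j, hj⟩; rw [pair_even] at hj; exact hj (hzall j)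
        have hdv : (fun n => (pair z v) (2 * n + 1)) = v := funext (pair_odd z v)
        rw [hnegE (pair z v) hdz, hdv]
        simp only [LLPO, Set.mem_setOf_eq]
        refine ⟨hamo, ?_⟩
        rcases lv01 v with h | h
        · right
          refine ⟨by rw [h], fun i _ => hzall i⟩
        · left
          refine ⟨by rw [h], fun i _ => hzall i⟩
end

section
/- For any problems f and g, the maximum with respect to continuous Weihrauch reducibility ≤*_W of the set {f' ∘ g' : f' ≤*_W f and g' ≤*_W g} exists, and it is continuously Weihrauch equivalent to the compositional product f * g. -/
/-!
Computable reductions are continuous, which gives the first half. For the bound, relativize: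
a continuous partial function on Baire space is computable relative to an oracle, namely the
table that lists, for each finite prefix `σ` and each `n`, the `n`-th output digit forced by
`σ` (if any). Take one such oracle `a` for the four functionals of the continuous reductions
`f' ≤*_W f` and `g' ≤*_W g`. Once `a` is attached to all instances and solutions of `f'` and
`g'`, these reductions become computable, so by maximality of `p` the composite of the two
relativized problems is `≤_W p`. That composite is `f' ∘ g'` relativized to `a`, and
attaching `a` is itself a continuous reduction.
-/

open Filter Topology PiNat Encodable

lemma initSeg_length (x : Baire) (m : ℕ) : (initSeg x m).length = m := by simp [initSeg]

lemma getElem?_initSeg {x : Baire} {m i : ℕ} (hi : i < m) : (initSeg x m)[i]? = some (x i) := by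
  simp [initSeg, hi]

lemma eq_of_getElem?_initSeg {x : Baire} {m i v : ℕ} (h : (initSeg x m)[i]? = some v) :
    v = x i := by
  by_cases hi : i < m
  · rw [getElem?_initSeg hi] at h
    exact (Option.some_inj.1 h).symm
  · rw [List.getElem?_eq_none (by simpa [initSeg_length] using hi)] at h
    cases h

lemma getD_initSeg {x : Baire} {m i : ℕ} (hi : i < m) : (initSeg x m).getD i 0 = x i := by
  simp [List.getD_eq_getElem?_getD, getElem?_initSeg hi]

lemma take_initSeg (x : Baire) (l m : ℕ) : (initSeg x m).take l = initSeg x (min l m) := by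
  rw [initSeg, ← List.map_take, List.take_range, initSeg]

lemma initSeg_eq_initSeg_iff {x y : Baire} {m : ℕ} :
    initSeg y m = initSeg x m ↔ y ∈ cylinder x m := by
  simp [initSeg, List.map_inj_left, cylinder]

def evens (z : Baire) : Baire := fun n => z (2 * n)

def odds (z : Baire) : Baire := fun n => z (2 * n + 1)

@[simp] lemma evens_pair (x y : Baire) : evens (pair x y) = x := by
  funext n; simp [evens, pair]

@[simp] lemma odds_pair (x y : Baire) : odds (pair x y) = y := by
  funext n; simp [odds, pair, Nat.add_mod, Nat.add_div]

lemma pair_right_injective (a : Baire) : Function.Injective (pair a) := fun x y h => by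
  simpa using congrArg odds h

lemma continuous_evens : Continuous evens := continuous_pi fun _ => continuous_apply _

lemma continuous_odds : Continuous odds := continuous_pi fun _ => continuous_apply _

lemma continuous_pair : Continuous fun p : Baire × Baire => pair p.1 p.2 := by
  refine continuous_pi fun n => ?_
  by_cases hn : n % 2 = 0 <;> simp only [pair, hn, ↓reduceIte] <;> fun_prop

lemma ContinuousOn.pair {X : Type*} [TopologicalSpace X] {F G : X → Baire} {D : Set X}
    (hF : ContinuousOn F D) (hG : ContinuousOn G D) : ContinuousOn (fun x => pair (F x) (G x)) D :=
  continuous_pair.comp_continuousOn (hF.prodMk hG)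

lemma nhds_hasBasis_cylinder (x : Baire) : (𝓝 x).HasBasis (fun _ => True) (cylinder x) := by
  refine ⟨fun U => ?_⟩
  rw [(isTopologicalBasis_cylinders fun _ => ℕ).mem_nhds_iff]
  constructor
  · rintro ⟨_, ⟨y, m, rfl⟩, hx, hU⟩
    exact ⟨m, trivial, mem_cylinder_iff_eq.1 hx ▸ hU⟩
  · rintro ⟨m, -, hU⟩
    exact ⟨_, ⟨x, m, rfl⟩, self_mem_cylinder x m, hU⟩

lemma continuousOn_iff_initSeg {F : Baire → Baire} {D : Set Baire} :
    ContinuousOn F D ↔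
      ∀ x ∈ D, ∀ n, ∃ m, ∀ y ∈ D, initSeg y m = initSeg x m → F y n = F x n := by
  refine forall₂_congr fun x _ => ?_
  rw [continuousWithinAt_pi]
  refine forall_congr' fun n => ?_
  rw [ContinuousWithinAt, nhds_discrete, tendsto_pure,
    (nhdsWithin_hasBasis (nhds_hasBasis_cylinder x) D).eventually_iff]
  simp only [true_and, Set.mem_inter_iff, and_imp, initSeg_eq_initSeg_iff]
  exact exists_congr fun m => ⟨fun h y hy hc => h hc hy, fun h y hc hy => h y hy hc⟩

lemma ComputableOn.continuousOn {F : Baire → Baire} {D : Set Baire} (hF : ComputableOn F D) :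
    ContinuousOn F D := by
  obtain ⟨φ, -, hφ⟩ := hF
  refine continuousOn_iff_initSeg.2 fun x hx n => ?_
  obtain ⟨m, hm⟩ := (hφ x hx n).1
  exact ⟨m, fun y hy hxy => ((hφ y hy n).2 m _ (hxy ▸ hm)).symm⟩

lemma ComputableOn.pair {F G : Baire → Baire} {D : Set Baire} (hF : ComputableOn F D)
    (hG : ComputableOn G D) : ComputableOn (fun z => pair (F z) (G z)) D := by
  obtain ⟨φ, hφc, hφ⟩ := hF
  obtain ⟨ψ, hψc, hψ⟩ := hG
  refine ⟨fun τ n => bif n % 2 == 0 then φ τ (n / 2) else ψ τ (n / 2), ?_,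
    fun z hz n => ?_⟩
  · refine Computable.cond ?_ (hφc.comp .fst ?_) (hψc.comp .fst ?_)
    · exact (Primrec.beq.comp (Primrec.nat_mod.comp .snd (.const 2)) (.const 0)).to_comp
    all_goals exact (Primrec.nat_div.comp .snd (.const 2)).to_comp
  by_cases hn : n % 2 = 0
  · simpa [_root_.pair, hn] using hφ z hz (n / 2)
  · simpa [_root_.pair, Nat.mod_two_ne_zero.1 hn] using hψ z hz (n / 2)

def backwardDom (f g : Problem) (k : Baire → Baire) : Set Baire :=
  {p | ∃ x ∈ Dom f, ∃ y ∈ g (k x), p = pair x y}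

lemma WRed.contWRed {f g : Problem} (h : WRed f g) : ContWRed f g := by
  obtain ⟨h, k, hk, hh, hred⟩ := h
  exact ⟨h, k, hk.continuousOn, hh.continuousOn, hred⟩

lemma ContWRed.trans {f g r : Problem} (hfg : ContWRed f g) (hgr : ContWRed g r) :
    ContWRed f r := by
  obtain ⟨h₁, k₁, hk₁, hh₁, hred₁⟩ := hfg
  obtain ⟨h₂, k₂, hk₂, hh₂, hred₂⟩ := hgr
  refine ⟨fun q => h₁ (pair (evens q) (h₂ (pair (k₁ (evens q)) (odds q)))), k₂ ∘ k₁,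
    hk₂.comp hk₁ fun x hx => (hred₁ x hx).1, ?_,
    fun x hx => ⟨(hred₂ _ (hred₁ x hx).1).1,
      fun z hz => by simpa using (hred₁ x hx).2 _ ((hred₂ _ (hred₁ x hx).1).2 z hz)⟩⟩
  have hevens : ContinuousOn (fun q => k₁ (evens q)) (backwardDom f r (k₂ ∘ k₁)) :=
    hk₁.comp continuous_evens.continuousOn (by rintro _ ⟨x, hx, z, -, rfl⟩; simpa using hx)
  have hinner := hh₂.comp (hevens.pair continuous_odds.continuousOn)
    (by rintro _ ⟨x, hx, z, hz, rfl⟩; exact ⟨k₁ x, (hred₁ x hx).1, z, hz, by simp⟩)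
  refine hh₁.comp (continuous_evens.continuousOn.pair hinner) ?_
  rintro _ ⟨x, hx, z, hz, rfl⟩
  exact ⟨x, hx, _, by simpa using (hred₂ _ (hred₁ x hx).1).2 z hz, by simp⟩

def IsPrefixRealizer (A : List ℕ → List ℕ) (α : Baire → Baire) : Prop :=
  Primrec A ∧ ∃ len : ℕ → ℕ, Tendsto len atTop atTop ∧
    ∀ z m, A (initSeg z m) = initSeg (α z) (len m)

def evensList (l : List ℕ) : List ℕ :=
  (List.range ((l.length + 1) / 2)).map fun i => l.getD (2 * i) 0

def oddsList (l : List ℕ) : List ℕ :=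
  (List.range (l.length / 2)).map fun i => l.getD (2 * i + 1) 0

def pairList (u v : List ℕ) : List ℕ :=
  (List.range (2 * min u.length v.length)).map
    fun i => if i % 2 = 0 then u.getD (i / 2) 0 else v.getD (i / 2) 0

open Primrec in
lemma isPrefixRealizer_evensList : IsPrefixRealizer evensList evens := by
  refine ⟨list_map (list_range.comp (nat_div.comp (succ.comp list_length) (const 2)))
    ((list_getD 0).comp fst (nat_mul.comp (const 2) snd)).to₂, fun m => (m + 1) / 2,
    tendsto_atTop_atTop.2 fun b => ⟨2 * b, fun m hm => by omega⟩, fun z m => ?_⟩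
  rw [evensList, initSeg_length]
  exact List.map_congr_left fun i hi => getD_initSeg (by simp at hi; omega)

open Primrec in
lemma isPrefixRealizer_oddsList : IsPrefixRealizer oddsList odds := by
  refine ⟨list_map (list_range.comp (nat_div.comp list_length (const 2)))
    ((list_getD 0).comp fst (succ.comp (nat_mul.comp (const 2) snd))).to₂, fun m => m / 2,
    tendsto_atTop_atTop.2 fun b => ⟨2 * b, fun m hm => by omega⟩, fun z m => ?_⟩
  rw [oddsList, initSeg_length]
  exact List.map_congr_left fun i hi => getD_initSeg (by simp at hi; omega)

section PrefixRealizer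

variable {A B : List ℕ → List ℕ} {α β : Baire → Baire}

lemma IsPrefixRealizer.comp (hA : IsPrefixRealizer A α) (hB : IsPrefixRealizer B β) :
    IsPrefixRealizer (A ∘ B) (α ∘ β) := by
  obtain ⟨hAp, lenA, hlenA, hA⟩ := hA
  obtain ⟨hBp, lenB, hlenB, hB⟩ := hB
  exact ⟨hAp.comp hBp, lenA ∘ lenB, hlenA.comp hlenB, fun z m => by simp [hA, hB]⟩

open Primrec in
lemma IsPrefixRealizer.pair (hA : IsPrefixRealizer A α) (hB : IsPrefixRealizer B β) :
    IsPrefixRealizer (fun τ => pairList (A τ) (B τ)) (fun z => _root_.pair (α z) (β z)) := by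
  obtain ⟨hAp, lenA, hlenA, hA⟩ := hA
  obtain ⟨hBp, lenB, hlenB, hB⟩ := hB
  have hpairList : Primrec₂ pairList := by
    have hc : PrimrecPred fun q : (List ℕ × List ℕ) × ℕ => q.2 % 2 = 0 :=
      PrimrecRel.comp Primrec.eq (nat_mod.comp snd (const 2)) (const 0)
    exact list_map (list_range.comp (nat_mul.comp (const 2)
        (nat_min.comp (list_length.comp fst) (list_length.comp snd))))
      (Primrec.ite hc ((list_getD 0).comp (fst.comp fst) (nat_div.comp snd (const 2)))
        ((list_getD 0).comp (snd.comp fst) (nat_div.comp snd (const 2)))).to₂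
  refine ⟨hpairList.comp hAp hBp, fun m => 2 * min (lenA m) (lenB m),
    tendsto_atTop.2 fun b => ((tendsto_atTop.1 hlenA b).and (tendsto_atTop.1 hlenB b)).mono
      fun m hm => by omega, fun z m => ?_⟩
  simp only [hA, hB, pairList, initSeg_length]
  refine List.map_congr_left fun i hi => ?_
  simp only [List.mem_range] at hi
  by_cases hi2 : i % 2 = 0 <;> simp only [_root_.pair, hi2, ↓reduceIte] <;>
    exact getD_initSeg (by omega)

lemma IsPrefixRealizer.computableOn (hA : IsPrefixRealizer A α) (D : Set Baire) :
    ComputableOn α D := by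
  obtain ⟨hAp, len, hlen, hA⟩ := hA
  refine ⟨fun τ n => (A τ)[n]?, (Primrec.list_getElem?.comp (hAp.comp .fst) .snd).to_comp,
    fun z _ n => ⟨?_, fun m v hv => ?_⟩⟩
  · obtain ⟨m, hm⟩ := (hlen.eventually_gt_atTop n).exists
    exact ⟨m, by simp only [hA, getElem?_initSeg hm]⟩
  · simp only [hA] at hv
    exact eq_of_getElem?_initSeg hv

end PrefixRealizer

def OracleComputableOn (a : Baire) (F : Baire → Baire) (D : Set Baire) : Prop :=
  ∃ φ : List ℕ × List ℕ → ℕ → Option ℕ, Computable₂ φ ∧ ∀ x ∈ D, ∀ n,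
    (∀ᶠ p in atTop ×ˢ atTop, φ (initSeg a p.1, initSeg x p.2) n = some (F x n)) ∧
    ∀ s m v, φ (initSeg a s, initSeg x m) n = some v → v = F x n

lemma OracleComputableOn.computableOn_comp {a : Baire} {F : Baire → Baire} {D D' : Set Baire}
    {A X : List ℕ → List ℕ} {α ξ : Baire → Baire} (hF : OracleComputableOn a F D)
    (hA : IsPrefixRealizer A α) (hX : IsPrefixRealizer X ξ)
    (hD : ∀ z ∈ D', α z = a ∧ ξ z ∈ D) :
    ComputableOn (fun z => F (ξ z)) D' := by
  obtain ⟨φ, hφc, hφ⟩ := hF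
  obtain ⟨hAp, lenA, hlenA, hA⟩ := hA
  obtain ⟨hXp, lenX, hlenX, hX⟩ := hX
  refine ⟨fun τ n => φ (A τ, X τ) n, hφc.comp ((hAp.pair hXp).to_comp.comp .fst) .snd,
    fun z hz n => ?_⟩
  obtain ⟨rfl, hξ⟩ := hD z hz
  refine ⟨?_, fun m v hv => (hφ _ hξ n).2 (lenA m) (lenX m) v
    (by simpa only [hA, hX] using hv)⟩
  obtain ⟨m, hm⟩ := ((hlenA.prodMk hlenX).eventually (hφ _ hξ n).1).exists
  exact ⟨m, by simpa only [hA, hX] using hm⟩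

section TableOracle

variable {ι : Type*} [Primcodable ι] {Fs : ι → Baire → Baire} {Ds : ι → Set Baire}
  {t : ι} {x : Baire}

-- If no point of `D` extends `σ`, the entry is arbitrary; such entries are never consulted.
open Classical in
noncomputable def tableEntry (F : Baire → Baire) (D : Set Baire) (σ : List ℕ) (n : ℕ) :
    Option ℕ :=
  if h : ∃ v, ∀ x ∈ D, initSeg x σ.length = σ → F x n = v then some h.choose else none

noncomputable def tableOracle (Fs : ι → Baire → Baire) (Ds : ι → Set Baire) : Baire :=
  fun c => encode ((decode (α := ι × List ℕ × ℕ) c).bind fun q =>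
    tableEntry (Fs q.1) (Ds q.1) q.2.1 q.2.2)

-- The entry for `τ` itself may lie beyond the available oracle prefix `σ`, so the entries of
-- all prefixes of `τ` are tried.
def tableLookup (t : ι) (σ τ : List ℕ) (n : ℕ) : Option ℕ :=
  ((List.range (τ.length + 1)).filterMap fun l =>
    σ[encode (t, τ.take l, n)]?.bind fun e => (decode (α := Option ℕ) e).join).head?

lemma tableEntry_sound {F : Baire → Baire} {D : Set Baire} {σ : List ℕ} {n v : ℕ} {x : Baire}
    (h : tableEntry F D σ n = some v) (hx : x ∈ D) (hσ : initSeg x σ.length = σ) :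
    v = F x n := by
  unfold tableEntry at h
  split_ifs at h with hex
  exact (Option.some_inj.1 h) ▸ (hex.choose_spec x hx hσ).symm

lemma tableLookup_sound (hx : x ∈ Ds t) {s m n v : ℕ}
    (h : tableLookup t (initSeg (tableOracle Fs Ds) s) (initSeg x m) n = some v) :
    v = Fs t x n := by
  obtain ⟨l, hl, he⟩ := List.mem_filterMap.1 (List.mem_of_mem_head? h)
  obtain ⟨e, he, hev⟩ := Option.bind_eq_some_iff.1 he
  rw [eq_of_getElem?_initSeg he, tableOracle] at hev
  simp only [encodek, Option.bind_some, Option.join_some, take_initSeg] at hev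
  exact tableEntry_sound hev hx (by rw [initSeg_length])

lemma tableLookup_complete (hx : x ∈ Ds t) (hF : ContinuousOn (Fs t) (Ds t)) (n : ℕ) :
    ∀ᶠ p in atTop ×ˢ atTop,
      tableLookup t (initSeg (tableOracle Fs Ds) p.1) (initSeg x p.2) n = some (Fs t x n) := by
  obtain ⟨m₀, hm₀⟩ := continuousOn_iff_initSeg.1 hF x hx n
  have hentry : tableEntry (Fs t) (Ds t) (initSeg x m₀) n = some (Fs t x n) := by
    have hex : ∃ v, ∀ y ∈ Ds t,
        initSeg y (initSeg x m₀).length = initSeg x m₀ → Fs t y n = v :=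
      ⟨Fs t x n, fun y hy hxy => hm₀ y hy (by rwa [initSeg_length] at hxy)⟩
    rw [tableEntry, dif_pos hex, (hex.choose_spec x hx (by rw [initSeg_length]))]
  filter_upwards [(eventually_gt_atTop (encode (t, initSeg x m₀, n))).prod_mk
    (eventually_ge_atTop m₀)] with ⟨s, m⟩ ⟨hs, hm⟩
  obtain ⟨w, hw⟩ :
      ∃ w, tableLookup t (initSeg (tableOracle Fs Ds) s) (initSeg x m) n = some w := by
    refine Option.isSome_iff_exists.1 (List.isSome_head?.2 (List.ne_nil_of_mem (a := Fs t x n)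
      (List.mem_filterMap.2 ⟨m₀, List.mem_range.2 (by simp [initSeg_length]; omega), ?_⟩)))
    rw [take_initSeg, min_eq_left hm, getElem?_initSeg hs]
    simp only [tableOracle, encodek, Option.bind_some, hentry, Option.join_some]
  rw [hw, tableLookup_sound hx hw]

open Primrec in
lemma primrec_tableLookup (t : ι) :
    Primrec₂ fun (p : List ℕ × List ℕ) (n : ℕ) => tableLookup t p.1 p.2 n := by
  have hentry : Primrec₂ fun (q : (List ℕ × List ℕ) × ℕ) (l : ℕ) =>
      q.1.1[encode (t, q.1.2.take l, q.2)]?.bind fun e => (decode (α := Option ℕ) e).join :=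
    option_bind (list_getElem?.comp (fst.comp (fst.comp fst)) (Primrec.encode.comp ((const t).pair
        ((list_take.comp snd (snd.comp (fst.comp fst))).pair (snd.comp fst)))))
      (((option_bind₁ (f := id) Primrec.id).comp Primrec.decode).comp snd)
  exact list_head?.comp (listFilterMap
    (list_range.comp (succ.comp (list_length.comp (snd.comp fst)))) hentry)

lemma exists_oracleComputableOn (Fs : ι → Baire → Baire) (Ds : ι → Set Baire)
    (hFs : ∀ t, ContinuousOn (Fs t) (Ds t)) : ∃ a, ∀ t, OracleComputableOn a (Fs t) (Ds t) :=
  ⟨tableOracle Fs Ds, fun t => ⟨fun p n => tableLookup t p.1 p.2 n,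
    (primrec_tableLookup t).to_comp,
    fun _ hx n => ⟨tableLookup_complete hx (hFs t) n, fun _ _ _ => tableLookup_sound hx⟩⟩⟩

end TableOracle

def Problem.relativize (a : Baire) (f : Problem) : Problem :=
  fun z => {w | ∃ x, z = pair a x ∧ ∃ y ∈ f x, w = pair a y}

section Relativize

variable {a : Baire} {f g : Problem}

lemma relativize_pair (x : Baire) : f.relativize a (pair a x) = pair a '' f x := by
  ext w
  simp [Problem.relativize, (pair_right_injective a).eq_iff, eq_comm]

lemma relativize_eq_empty {z : Baire} (hz : ∀ x, z ≠ pair a x) : f.relativize a z = ∅ :=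
  Set.eq_empty_of_forall_notMem fun _ ⟨x, hx, _⟩ => hz x hx

lemma dom_relativize : Dom (f.relativize a) = pair a '' Dom f := by
  ext z
  constructor
  · rintro ⟨-, x, rfl, y, hy, rfl⟩
    exact ⟨x, ⟨y, hy⟩, rfl⟩
  · rintro ⟨x, ⟨y, hy⟩, rfl⟩
    exact ⟨pair a y, x, rfl, y, hy, rfl⟩

lemma relativize_pcomp : (pcomp f g).relativize a = pcomp (f.relativize a) (g.relativize a) := by
  funext z
  by_cases hz : ∃ x, z = pair a x
  · obtain ⟨x, rfl⟩ := hz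
    ext w
    simp only [pcomp, relativize_pair, dom_relativize,
      Set.image_subset_image_iff (pair_right_injective a), Set.exists_mem_image]
    aesop
  · push Not at hz
    rw [relativize_eq_empty hz]
    ext w
    simp [pcomp, relativize_eq_empty hz]

lemma contWRed_relativize (a : Baire) (f : Problem) : ContWRed f (f.relativize a) := by
  refine ⟨fun q => odds (odds q), pair a,
    (continuous_pair.comp (continuous_const.prodMk continuous_id)).continuousOn,
    (continuous_odds.comp continuous_odds).continuousOn, fun x hx => ⟨?_, fun w hw => ?_⟩⟩
  · rw [dom_relativize]
    exact ⟨x, hx, rfl⟩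
  · rw [relativize_pair] at hw
    obtain ⟨y, hy, rfl⟩ := hw
    simpa using hy

lemma wRed_relativize {h k : Baire → Baire} (hk : OracleComputableOn a k (Dom f))
    (hh : OracleComputableOn a h (backwardDom f g k))
    (hred : ∀ x ∈ Dom f, k x ∈ Dom g ∧ ∀ y ∈ g (k x), h (pair x y) ∈ f x) :
    WRed (f.relativize a) g := by
  have hevens₂ := isPrefixRealizer_evensList.comp isPrefixRealizer_evensList
  refine ⟨fun q => pair (evens (evens q)) (h (pair (odds (evens q)) (odds q))),
    fun z => k (odds z), ?_, (hevens₂.computableOn _).pair (hh.computableOn_comp hevens₂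
      ((isPrefixRealizer_oddsList.comp isPrefixRealizer_evensList).pair isPrefixRealizer_oddsList)
      ?_), ?_⟩
  · rw [dom_relativize]
    exact hk.computableOn_comp isPrefixRealizer_evensList isPrefixRealizer_oddsList
      (by rintro _ ⟨x, hx, rfl⟩; simpa using hx)
  · rintro _ ⟨z, hz, y, hy, rfl⟩
    rw [dom_relativize] at hz
    obtain ⟨x, hx, rfl⟩ := hz
    simp only [odds_pair] at hy
    simpa using ⟨x, hx, y, hy, rfl⟩
  · rw [dom_relativize]
    rintro _ ⟨x, hx, rfl⟩
    refine ⟨by simpa using (hred x hx).1, fun y hy => ?_⟩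
    simp only [evens_pair, odds_pair, relativize_pair] at hy ⊢
    exact ⟨_, (hred x hx).2 y hy, rfl⟩

end Relativize

/-- The maximum, with respect to continuous Weihrauch reducibility, of
`{f' ∘ g' : f' ≤*_W f, g' ≤*_W g}` exists and is continuously Weihrauch equivalent
to the compositional product `f * g`: any representative `p` of `f * g` is
`≡*_W`-equivalent to a member of this set and `≤*_W`-bounds the whole set. -/
theorem contCompProd_eq_compProd (f g p : Problem) (hp : IsCompProd f g p) :
    (∃ f' g' : Problem, ContWRed f' f ∧ ContWRed g' g ∧ ContWEquiv (pcomp f' g') p) ∧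
    (∀ f' g' : Problem, ContWRed f' f → ContWRed g' g → ContWRed (pcomp f' g') p) := by
  obtain ⟨⟨f₀, g₀, hf₀, hg₀, hp₀⟩, hmax⟩ := hp
  refine ⟨⟨f₀, g₀, hf₀.contWRed, hg₀.contWRed, ?_⟩, ?_⟩
  · exact ⟨hp₀.2.contWRed, hp₀.1.contWRed⟩
  rintro f' g' ⟨h₁, k₁, hk₁, hh₁, hred₁⟩ ⟨h₂, k₂, hk₂, hh₂, hred₂⟩
  obtain ⟨a, ha⟩ := exists_oracleComputableOn ![k₁, h₁, k₂, h₂]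
    ![Dom f', backwardDom f' f k₁, Dom g', backwardDom g' g k₂]
    (by intro i; fin_cases i <;> assumption)
  have hf : WRed (f'.relativize a) f := wRed_relativize (ha 0) (ha 1) hred₁
  have hg : WRed (g'.relativize a) g := wRed_relativize (ha 2) (ha 3) hred₂
  refine (contWRed_relativize a _).trans ?_
  rw [relativize_pcomp]
  exact (hmax _ _ hf hg).contWRed
end
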